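/- Let O be a 2S×2S real orthogonal matrix, let 1 ≤ i ≤ S and 1 ≤ j ≤ 2S. Then there exists a 2S×2S real orthogonal symplectic matrix W and a nonzero real constant λ such that columns 2i−1 and 2i of the product OW are proportional with ratio λ in every row except possibly row j; that is, (OW)_{l,2i} = λ·(OW)_{l,2i−1} for all rows l ≠ j. -/

import Mathlib

/-!
An orthogonal matrix is symplectic iff it commutes with `Ω`, so the orthogonal symplectic
matrices are the unitaries of `ℝ^{2S}` made complex by the complex structure `Ω`. Unitaries
act transitively on the unit sphere: a global phase `cos θ + sin θ • Ω` arranges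
`⟨x, Ω w⟩ = 0`, after which the complex Householder reflection along `x - w` sends `x` to `w`.

Let `c` be row `j` of `O` and `w = (c - Ω c) / √2`, a unit vector, and let `W` be unitary with
`W e₂ᵢ = w`. Column `2i` of `O W` is `O w`, while column `2i+1` is
`O (-Ω w) = O w - √2 eⱼ`, which agrees with it off row `j`; so `λ = 1` works.
-/

open Matrix

/-- The standard symplectic form `Ω` on `2S` phase-space coordinates ordered
`(q₁,p₁,…,q_S,p_S)`: the direct sum of `S` copies of `[[0,1],[-1,0]]`. -/
def Omega (S : ℕ) : Matrix (Fin (2 * S)) (Fin (2 * S)) ℝ :=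
  Matrix.of fun i j =>
    if i.val + 1 = j.val ∧ i.val % 2 = 0 then (1 : ℝ)
    else if j.val + 1 = i.val ∧ j.val % 2 = 0 then -1 else 0

/-- A `2S × 2S` real matrix is orthogonal symplectic if `WᵀW = 1` and `WᵀΩW = Ω`. -/
def IsOrthoSymp (S : ℕ) (W : Matrix (Fin (2 * S)) (Fin (2 * S)) ℝ) : Prop :=
  Wᵀ * W = 1 ∧ Wᵀ * Omega S * W = Omega S

theorem exists_mul_cos_add_mul_sin_eq_zero (a b : ℝ) :
    ∃ θ : ℝ, a * Real.cos θ + b * Real.sin θ = 0 := by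
  let z : ℂ := ⟨b, -a⟩
  have hre : ‖z‖ * Real.cos z.arg = b := Complex.norm_mul_cos_arg z
  have him : ‖z‖ * Real.sin z.arg = -a := Complex.norm_mul_sin_arg z
  exact ⟨z.arg, by linear_combination Real.cos z.arg * him - Real.sin z.arg * hre⟩

section

variable {n : Type*} [Fintype n]

/-- `(d ⬝ᵥ d)` times the orthogonal projection onto the complex line `span {d, J d}`. -/
def complexProjector (J : Matrix n n ℝ) (d : n → ℝ) : Matrix n n ℝ :=
  vecMulVec d d + vecMulVec (J *ᵥ d) (J *ᵥ d)

theorem complexProjector_transpose (J : Matrix n n ℝ) (d : n → ℝ) :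
    (complexProjector J d)ᵀ = complexProjector J d := by
  simp only [complexProjector, transpose_add, transpose_vecMulVec]

theorem complexProjector_mulVec (J : Matrix n n ℝ) (d x : n → ℝ) :
    complexProjector J d *ᵥ x = (d ⬝ᵥ x) • d + (J *ᵥ d ⬝ᵥ x) • J *ᵥ d := by
  simp only [complexProjector, add_mulVec, vecMulVec_mulVec, op_smul_eq_smul]

variable [DecidableEq n]

theorem dotProduct_mulVec_mulVec_of_transpose_mul_self {W : Matrix n n ℝ} (hW : Wᵀ * W = 1)
    (a b : n → ℝ) : W *ᵥ a ⬝ᵥ W *ᵥ b = a ⬝ᵥ b := by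
  rw [dotProduct_mulVec, ← mulVec_transpose, mulVec_mulVec, hW, one_mulVec]

structure IsCompatibleComplexStructure (J : Matrix n n ℝ) : Prop where
  transpose_eq_neg : Jᵀ = -J
  mul_self : J * J = -1

noncomputable def complexPhase (J : Matrix n n ℝ) (θ : ℝ) : Matrix n n ℝ :=
  Real.cos θ • 1 + Real.sin θ • J

/-- For `d = 0` the junk value `2 / 0 = 0` makes this the identity. -/
noncomputable def complexReflection (J : Matrix n n ℝ) (d : n → ℝ) : Matrix n n ℝ :=
  1 - (2 / (d ⬝ᵥ d)) • complexProjector J d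

theorem commute_complexPhase (J : Matrix n n ℝ) (θ : ℝ) : Commute J (complexPhase J θ) :=
  ((Commute.one_right J).smul_right _).add_right ((Commute.refl J).smul_right _)

theorem complexReflection_transpose (J : Matrix n n ℝ) (d : n → ℝ) :
    (complexReflection J d)ᵀ = complexReflection J d := by
  rw [complexReflection, transpose_sub, transpose_one, transpose_smul, complexProjector_transpose]

variable {J : Matrix n n ℝ}

namespace IsCompatibleComplexStructure

theorem transpose_mul_self (hJ : IsCompatibleComplexStructure J) : Jᵀ * J = 1 := by
  rw [hJ.transpose_eq_neg, neg_mul, hJ.mul_self, neg_neg]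

theorem dotProduct_mulVec (hJ : IsCompatibleComplexStructure J) (a b : n → ℝ) :
    a ⬝ᵥ J *ᵥ b = -(J *ᵥ a ⬝ᵥ b) := by
  rw [Matrix.dotProduct_mulVec, ← mulVec_transpose, hJ.transpose_eq_neg, neg_mulVec,
    neg_dotProduct]

theorem dotProduct_mulVec_self (hJ : IsCompatibleComplexStructure J) (a : n → ℝ) :
    a ⬝ᵥ J *ᵥ a = 0 := by
  have h := hJ.dotProduct_mulVec a a
  rw [dotProduct_comm (J *ᵥ a)] at h
  linarith

theorem mulVec_mulVec_self (hJ : IsCompatibleComplexStructure J) (a : n → ℝ) :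
    J *ᵥ J *ᵥ a = -a := by
  rw [mulVec_mulVec, hJ.mul_self, neg_mulVec, one_mulVec]

theorem exists_unit_neg_mulVec_eq_sub_smul (hJ : IsCompatibleComplexStructure J) {c : n → ℝ}
    (hc : c ⬝ᵥ c = 1) : ∃ w : n → ℝ, w ⬝ᵥ w = 1 ∧ -(J *ᵥ w) = w - √2 • c := by
  have hs : (√2)⁻¹ * (√2)⁻¹ * 2 = 1 := by
    rw [← mul_inv, Real.mul_self_sqrt zero_le_two, inv_mul_cancel₀ two_ne_zero]
  have hs2 : √2 = 2 * (√2)⁻¹ := by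
    field_simp
    exact Real.sq_sqrt zero_le_two
  refine ⟨(√2)⁻¹ • (c - J *ᵥ c), ?_, ?_⟩
  · simp only [dotProduct_smul, smul_dotProduct, sub_dotProduct, dotProduct_sub,
      hJ.dotProduct_mulVec_self, dotProduct_comm (J *ᵥ c) c, hc, smul_eq_mul,
      dotProduct_mulVec_mulVec_of_transpose_mul_self hJ.transpose_mul_self]
    linarith
  · rw [show √2 • c = (2 * (√2)⁻¹) • c by rw [← hs2], mulVec_smul, mulVec_sub,
      hJ.mulVec_mulVec_self]
    module

end IsCompatibleComplexStructure

theorem complexPhase_transpose_mul_self (hJ : IsCompatibleComplexStructure J) (θ : ℝ) :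
    (complexPhase J θ)ᵀ * complexPhase J θ = 1 := by
  have hsq := Real.cos_sq_add_sin_sq θ
  rw [complexPhase, transpose_add, transpose_smul, transpose_smul, transpose_one,
    hJ.transpose_eq_neg]
  simp only [add_mul, mul_add, smul_mul_smul_comm, one_mul, mul_one, neg_mul, hJ.mul_self,
    smul_neg]
  conv_rhs => rw [← one_smul ℝ (1 : Matrix n n ℝ), ← hsq]
  module

theorem exists_complexPhase_mulVec_dotProduct_mulVec_eq_zero
    (hJ : IsCompatibleComplexStructure J) (x w : n → ℝ) :
    ∃ θ : ℝ, complexPhase J θ *ᵥ x ⬝ᵥ J *ᵥ w = 0 := by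
  obtain ⟨θ, hθ⟩ := exists_mul_cos_add_mul_sin_eq_zero (x ⬝ᵥ J *ᵥ w) (x ⬝ᵥ w)
  refine ⟨θ, ?_⟩
  rw [complexPhase, add_mulVec, smul_mulVec, smul_mulVec, one_mulVec, add_dotProduct,
    smul_dotProduct, smul_dotProduct, dotProduct_mulVec_mulVec_of_transpose_mul_self
    hJ.transpose_mul_self, smul_eq_mul, smul_eq_mul]
  linarith

theorem complexProjector_mul_self (hJ : IsCompatibleComplexStructure J) (d : n → ℝ) :
    complexProjector J d * complexProjector J d = (d ⬝ᵥ d) • complexProjector J d := by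
  have hdJd : d ⬝ᵥ J *ᵥ d = 0 := hJ.dotProduct_mulVec_self d
  have hJdd : J *ᵥ d ⬝ᵥ d = 0 := by rw [dotProduct_comm, hdJd]
  have hJdJd : J *ᵥ d ⬝ᵥ J *ᵥ d = d ⬝ᵥ d :=
    dotProduct_mulVec_mulVec_of_transpose_mul_self hJ.transpose_mul_self d d
  simp only [complexProjector, add_mul, mul_add, vecMulVec_mul_vecMulVec, hdJd, hJdd, hJdJd,
    zero_smul, vecMulVec_zero, add_zero, zero_add, vecMulVec_smul, smul_add]

theorem commute_complexProjector (hJ : IsCompatibleComplexStructure J) (d : n → ℝ) :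
    Commute J (complexProjector J d) := by
  have hdJ : d ᵥ* J = -(J *ᵥ d) := by
    rw [← mulVec_transpose, hJ.transpose_eq_neg, neg_mulVec]
  have hJdJ : (J *ᵥ d) ᵥ* J = d := by
    rw [← mulVec_transpose, hJ.transpose_eq_neg, neg_mulVec, hJ.mulVec_mulVec_self, neg_neg]
  simp only [Commute, SemiconjBy, complexProjector, mul_add, add_mul, mul_vecMulVec,
    vecMulVec_mul, hdJ, hJdJ, hJ.mulVec_mulVec_self, vecMulVec_neg, neg_vecMulVec]
  abel

theorem complexReflection_mul_self (hJ : IsCompatibleComplexStructure J) (d : n → ℝ) :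
    complexReflection J d * complexReflection J d = 1 := by
  have hcoeff : 2 / (d ⬝ᵥ d) * (2 / (d ⬝ᵥ d)) * (d ⬝ᵥ d) = 2 * (2 / (d ⬝ᵥ d)) := by
    rcases eq_or_ne (d ⬝ᵥ d) 0 with h | h
    · simp [h]
    · field_simp
  simp only [complexReflection, sub_mul, mul_sub, one_mul, mul_one, smul_mul_smul_comm,
    complexProjector_mul_self hJ, smul_smul, hcoeff]
  module

theorem commute_complexReflection (hJ : IsCompatibleComplexStructure J) (d : n → ℝ) :
    Commute J (complexReflection J d) :=
  (Commute.one_right J).sub_right ((commute_complexProjector hJ d).smul_right _)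

theorem complexReflection_sub_mulVec (hJ : IsCompatibleComplexStructure J) {x w : n → ℝ}
    (hxw : x ⬝ᵥ x = w ⬝ᵥ w) (hxJw : x ⬝ᵥ J *ᵥ w = 0) :
    complexReflection J (x - w) *ᵥ x = w := by
  set d := x - w
  have hJdx : J *ᵥ d ⬝ᵥ x = 0 := by
    rw [dotProduct_comm, ← hJ.dotProduct_mulVec_self x, mulVec_sub, dotProduct_sub, hxJw,
      sub_zero]
  have hdd : d ⬝ᵥ d = 2 * (d ⬝ᵥ x) := by
    simp only [d, sub_dotProduct, dotProduct_sub, dotProduct_comm w x, hxw]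
    ring
  rw [complexReflection, sub_mulVec, one_mulVec, smul_mulVec, complexProjector_mulVec, hJdx,
    zero_smul, add_zero, smul_smul]
  rcases eq_or_ne (d ⬝ᵥ d) 0 with h | h
  · rw [dotProduct_self_eq_zero.mp h, smul_zero, sub_zero]
    exact sub_eq_zero.mp (dotProduct_self_eq_zero.mp h)
  · rw [show 2 / (d ⬝ᵥ d) * (d ⬝ᵥ x) = 1 by field_simp; linarith, one_smul, sub_sub_cancel]

theorem exists_orthogonal_commute_mulVec_eq (hJ : IsCompatibleComplexStructure J)
    {x w : n → ℝ} (hxw : x ⬝ᵥ x = w ⬝ᵥ w) :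
    ∃ W : Matrix n n ℝ, Wᵀ * W = 1 ∧ Commute J W ∧ W *ᵥ x = w := by
  obtain ⟨θ, hθ⟩ := exists_complexPhase_mulVec_dotProduct_mulVec_eq_zero hJ x w
  have hP := complexPhase_transpose_mul_self hJ θ
  set x' := complexPhase J θ *ᵥ x
  have hx'w : x' ⬝ᵥ x' = w ⬝ᵥ w := by
    rw [dotProduct_mulVec_mulVec_of_transpose_mul_self hP, hxw]
  set H := complexReflection J (x' - w)
  refine ⟨H * complexPhase J θ, ?_, ?_, ?_⟩
  · rw [transpose_mul, complexReflection_transpose, Matrix.mul_assoc, ← Matrix.mul_assoc H,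
      complexReflection_mul_self hJ, Matrix.one_mul, hP]
  · exact (commute_complexReflection hJ _).mul_right (commute_complexPhase J θ)
  · rw [← mulVec_mulVec, complexReflection_sub_mulVec hJ hx'w hθ]

end

theorem Omega_transpose (S : ℕ) : (Omega S)ᵀ = -Omega S := by
  ext a b
  simp only [Omega, transpose_apply, Matrix.neg_apply, of_apply]
  split_ifs <;> first | omega | norm_num

theorem Omega_mul_self (S : ℕ) : Omega S * Omega S = -1 := by
  ext a b
  let p : Fin (2 * S) :=
    ⟨if a.val % 2 = 0 then a.val + 1 else a.val - 1, by have := a.isLt; split <;> omega⟩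
  rw [mul_apply, Finset.sum_eq_single p]
  · simp only [Omega, of_apply, Matrix.neg_apply, Matrix.one_apply, p, Fin.ext_iff]
    split_ifs <;> first | omega | norm_num
  · intro m _ hm
    simp only [Omega, of_apply, p, ne_eq, Fin.ext_iff] at hm ⊢
    split_ifs at hm ⊢ <;> first | omega | norm_num
  · simp

theorem Omega_mulVec_single (S : ℕ) (i : Fin S) :
    Omega S *ᵥ Pi.single ⟨2 * i.val, by omega⟩ 1
      = -Pi.single ⟨2 * i.val + 1, by omega⟩ 1 := by
  ext k
  simp only [mulVec_single_one, col_apply, Omega, of_apply, Pi.neg_apply, Pi.single_apply,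
    Fin.ext_iff]
  split_ifs <;> first | omega | norm_num

theorem isOrthoSymp_of_commute {S : ℕ} {W : Matrix (Fin (2 * S)) (Fin (2 * S)) ℝ}
    (hW : Wᵀ * W = 1) (hΩW : Commute (Omega S) W) : IsOrthoSymp S W :=
  ⟨hW, by rw [Matrix.mul_assoc, hΩW.eq, ← Matrix.mul_assoc, hW, Matrix.one_mul]⟩

theorem mulVec_single_odd_of_commute_Omega {S : ℕ} {W : Matrix (Fin (2 * S)) (Fin (2 * S)) ℝ}
    (hΩW : Commute (Omega S) W) (i : Fin S) :
    W *ᵥ Pi.single ⟨2 * i.val + 1, by omega⟩ 1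
      = -(Omega S *ᵥ W *ᵥ Pi.single ⟨2 * i.val, by omega⟩ 1) := by
  rw [← neg_neg (Pi.single _ 1), ← Omega_mulVec_single, mulVec_neg, mulVec_mulVec,
    mulVec_mulVec, hΩW.eq]

-- Indices are `0`-based: the mode-`i` columns are `2i` and `2i+1`.
theorem exists_ortho_symp_cols_proportional (S : ℕ)
    (O : Matrix (Fin (2 * S)) (Fin (2 * S)) ℝ) (hO : Oᵀ * O = 1)
    (i : Fin S) (j : Fin (2 * S)) :
    ∃ (W : Matrix (Fin (2 * S)) (Fin (2 * S)) ℝ) (lam : ℝ),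
      IsOrthoSymp S W ∧ lam ≠ 0 ∧
      ∀ l : Fin (2 * S), l ≠ j →
        (O * W) l ⟨2 * i.val + 1, by have := i.isLt; omega⟩
          = lam * (O * W) l ⟨2 * i.val, by have := i.isLt; omega⟩ := by
  have hΩ : IsCompatibleComplexStructure (Omega S) := ⟨Omega_transpose S, Omega_mul_self S⟩
  set c := Oᵀ *ᵥ Pi.single j 1
  have hOc : O *ᵥ c = Pi.single j 1 := by rw [mulVec_mulVec, mul_eq_one_comm.mp hO, one_mulVec]
  have hcc : c ⬝ᵥ c = 1 := by
    rw [dotProduct_mulVec_mulVec_of_transpose_mul_self (by rwa [transpose_transpose,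
      ← mul_eq_one_comm]), dotProduct_single, Pi.single_eq_same, mul_one]
  obtain ⟨w, hww, hΩw⟩ := hΩ.exists_unit_neg_mulVec_eq_sub_smul hcc
  obtain ⟨W, hW, hΩW, hWe⟩ := exists_orthogonal_commute_mulVec_eq hΩ
    (x := Pi.single ⟨2 * i.val, by omega⟩ 1)
    (by rw [hww, dotProduct_single, Pi.single_eq_same, mul_one])
  refine ⟨W, 1, isOrthoSymp_of_commute hW hΩW, one_ne_zero, fun l hl => ?_⟩
  have hcol (k : Fin (2 * S)) : (O * W) l k = (O *ᵥ W *ᵥ Pi.single k 1) l := by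
    rw [mulVec_mulVec, mulVec_single_one, col_apply]
  rw [one_mul, hcol, hcol, mulVec_single_odd_of_commute_Omega hΩW, hWe, hΩw, mulVec_sub,
    mulVec_smul, hOc, Pi.sub_apply, Pi.smul_apply, Pi.single_eq_of_ne hl, smul_zero, sub_zero]
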